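/- For every integer n ≥ 0, both −φ and φ⁻¹ are eigenvalues of the adjacency matrix A(R̃_n), where φ = (1+√5)/2 is the golden ratio. -/

import Mathlib

/-- The 5-cycle `C₅` on `Fin 5`. -/
def cycle5 : SimpleGraph (Fin 5) :=
  SimpleGraph.fromRel (fun i j => j = i + 1)

instance : DecidableRel cycle5.Adj := fun i j =>
  decidable_of_iff (i ≠ j ∧ (j = i + 1 ∨ i = j + 1)) Iff.rfl

/-- Duplicating the vertex `v'` of a simple graph `G`: a new vertex (the `Sum.inr` vertex) is
added, adjacent to `v'` and to every neighbor of `v'` in `G`. -/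
def dupGraph {V : Type*} (G : SimpleGraph V) (v' : V) : SimpleGraph (V ⊕ Unit) where
  Adj x y :=
    match x, y with
    | Sum.inl a, Sum.inl b => G.Adj a b
    | Sum.inl a, Sum.inr _ => a = v' ∨ G.Adj a v'
    | Sum.inr _, Sum.inl b => b = v' ∨ G.Adj b v'
    | Sum.inr _, Sum.inr _ => False
  symm := by
    refine ⟨?_⟩
    rintro (a | a) (b | b) h
    · exact G.adj_symm h
    · exact h
    · exact h
    · exact h.elim
  loopless := by
    refine ⟨?_⟩
    rintro (a | a) h
    · exact G.irrefl h
    · exact h.elim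

instance dupGraphAdjDecidable {V : Type*} [DecidableEq V] (G : SimpleGraph V)
    [DecidableRel G.Adj] (v' : V) : DecidableRel (dupGraph G v').Adj := fun x y =>
  match x, y with
  | Sum.inl a, Sum.inl b => inferInstanceAs (Decidable (G.Adj a b))
  | Sum.inl a, Sum.inr _ => inferInstanceAs (Decidable (a = v' ∨ G.Adj a v'))
  | Sum.inr _, Sum.inl b => inferInstanceAs (Decidable (b = v' ∨ G.Adj b v'))
  | Sum.inr _, Sum.inr _ => inferInstanceAs (Decidable False)

/-- The vertex type of the reseminant graph built from `C₅` by the duplications recorded in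
the list `l` (each entry records which of the five original cycle vertices is duplicated). -/
def resemType : List (Fin 5) → Type
  | [] => Fin 5
  | _ :: l => resemType l ⊕ Unit

instance resemTypeFintype : ∀ l : List (Fin 5), Fintype (resemType l)
  | [] => inferInstanceAs (Fintype (Fin 5))
  | _ :: l => letI := resemTypeFintype l; inferInstanceAs (Fintype (resemType l ⊕ Unit))

instance resemTypeDecEq : ∀ l : List (Fin 5), DecidableEq (resemType l)
  | [] => inferInstanceAs (DecidableEq (Fin 5))
  | _ :: l => letI := resemTypeDecEq l; inferInstanceAs (DecidableEq (resemType l ⊕ Unit))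

/-- The copy, inside `resemType l`, of an original vertex of the 5-cycle. -/
def origVert : (l : List (Fin 5)) → Fin 5 → resemType l
  | [], i => i
  | _ :: l, i => Sum.inl (origVert l i)

/-- The reseminant graph obtained from the 5-cycle `C₅` by the finite sequence of vertex
duplications recorded in `l`: for `l = v :: l'`, the vertex (the copy of the original cycle
vertex) `v` is duplicated in the graph built from `l'`. -/
def resemGraph : (l : List (Fin 5)) → SimpleGraph (resemType l)
  | [] => cycle5
  | v :: l => dupGraph (resemGraph l) (origVert l v)

instance resemGraphAdjDecidable : ∀ l : List (Fin 5), DecidableRel (resemGraph l).Adj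
  | [] => inferInstanceAs (DecidableRel cycle5.Adj)
  | v :: l =>
    letI := resemGraphAdjDecidable l
    inferInstanceAs (DecidableRel (dupGraph (resemGraph l) (origVert l v)).Adj)

/-- A simple graph is *reseminant* if it is (isomorphic to) a graph obtained from the 5-cycle
`C₅` by a finite sequence of vertex duplications, each duplicating one of the five original
cycle vertices. -/
def IsReseminant {V : Type*} (Γ : SimpleGraph V) : Prop :=
  ∃ l : List (Fin 5), Nonempty (Γ ≃g resemGraph l)

/-- `R̃_n`: the reseminant graph on `n + 5` vertices obtained from `C₅` by `n` successive
duplications, all duplicating the same fixed vertex `0` of the original 5-cycle. -/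
def tildeR (n : ℕ) : SimpleGraph (resemType (List.replicate n 0)) :=
  resemGraph (List.replicate n 0)

instance (n : ℕ) : DecidableRel (tildeR n).Adj :=
  resemGraphAdjDecidable (List.replicate n 0)

/-- The golden ratio `φ = (1 + √5)/2`. -/
noncomputable def goldenRatio' : ℝ := (1 + Real.sqrt 5) / 2

/-!
The numbers `-φ` and `φ⁻¹` are the roots of `μ² + μ = 1`, and for such `μ` the vector
`(0, 1, μ, -μ, -1)` is a `μ`-eigenvector of `A(C₅)` vanishing at vertex `0`. Duplicating a
vertex at which an eigenvector vanishes keeps it an eigenvector once it is extended by `0` on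
the new vertex: the new row of the adjacency matrix is the row of the duplicated vertex `v'` plus
its indicator, so the new coordinate of `A f` is `(A f)(v') + f(v') = μ f(v') + f(v') = 0`.
-/

open Matrix Real goldenRatio

theorem Matrix.isRoot_charpoly_of_mulVec_eq_smul {R n : Type*} [CommRing R] [IsDomain R]
    [Fintype n] [DecidableEq n] {M : Matrix n n R} {μ : R} {v : n → R} (hv : v ≠ 0)
    (h : M *ᵥ v = μ • v) : M.charpoly.IsRoot μ := by
  rw [← charpoly_toLin', ← Module.End.hasEigenvalue_iff_isRoot_charpoly]
  exact Module.End.hasEigenvalue_of_hasEigenvector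
    ⟨Module.End.mem_eigenspace_iff.2 (by simpa using h), hv⟩

section Duplication

variable {V : Type*} (G : SimpleGraph V) (v' : V)

@[simp]
theorem dupGraph_adj_inl_inl {a b : V} : (dupGraph G v').Adj (.inl a) (.inl b) ↔ G.Adj a b :=
  Iff.rfl

@[simp]
theorem dupGraph_adj_inr_inl {u : Unit} {b : V} :
    (dupGraph G v').Adj (.inr u) (.inl b) ↔ b = v' ∨ G.Adj b v' :=
  Iff.rfl

variable {R : Type*} [Fintype V] [DecidableEq V] [NonAssocSemiring R] [DecidableRel G.Adj]

theorem adjMatrix_dupGraph_mulVec_sumElim_zero (f : V → R) :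
    (dupGraph G v').adjMatrix R *ᵥ Sum.elim f 0 =
      Sum.elim (G.adjMatrix R *ᵥ f) fun _ => (G.adjMatrix R *ᵥ f) v' + f v' := by
  funext x
  rcases x with a | u
  · simp [mulVec, dotProduct, Fintype.sum_sum_type, SimpleGraph.adjMatrix_apply]
  · have hrow (b : V) : (if b = v' ∨ G.Adj b v' then f b else 0) =
        (if G.Adj v' b then f b else 0) + if v' = b then f b else 0 := by
      by_cases hb : v' = b
      · subst hb; simp
      · simp [hb, Ne.symm hb, G.adj_comm]
    simp [mulVec, dotProduct, Fintype.sum_sum_type, SimpleGraph.adjMatrix_apply, hrow,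
      Finset.sum_add_distrib]

theorem adjMatrix_dupGraph_mulVec_sumElim_zero_of_eq_smul {μ : R} {f : V → R}
    (hf : G.adjMatrix R *ᵥ f = μ • f) (hfv' : f v' = 0) :
    (dupGraph G v').adjMatrix R *ᵥ Sum.elim f 0 = μ • Sum.elim f 0 := by
  rw [adjMatrix_dupGraph_mulVec_sumElim_zero, hf]
  funext x
  rcases x with a | u <;> simp [hfv']

end Duplication

theorem cycle5_adj {i j : Fin 5} : cycle5.Adj i j ↔ i ≠ j ∧ (j = i + 1 ∨ i = j + 1) := Iff.rfl

theorem cycle5_adjMatrix_mulVec {R : Type*} [NonAssocSemiring R] (x : Fin 5 → R) :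
    cycle5.adjMatrix R *ᵥ x = fun i => x (i + 1) + x (i - 1) := by
  funext i
  fin_cases i <;> simp [mulVec, dotProduct, Fin.sum_univ_five, SimpleGraph.adjMatrix_apply,
    cycle5_adj] <;> first | rfl | exact add_comm _ _

def liftCycle5 {R : Type*} [Zero R] (x : Fin 5 → R) : (l : List (Fin 5)) → resemType l → R
  | [] => x
  | _ :: l => Sum.elim (liftCycle5 x l) 0

theorem liftCycle5_origVert {R : Type*} [Zero R] (x : Fin 5 → R) (i : Fin 5) :
    ∀ l, liftCycle5 x l (origVert l i) = x i
  | [] => rfl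
  | _ :: l => liftCycle5_origVert x i l

theorem liftCycle5_ne_zero {R : Type*} [Zero R] {x : Fin 5 → R} (hx : x ≠ 0) (l : List (Fin 5)) :
    liftCycle5 x l ≠ 0 := by
  obtain ⟨i, hi⟩ := Function.ne_iff.1 hx
  exact Function.ne_iff.2 ⟨origVert l i, by rwa [liftCycle5_origVert]⟩

theorem resemGraph_adjMatrix_mulVec_liftCycle5 {R : Type*} [NonAssocSemiring R] {μ : R}
    {x : Fin 5 → R} (hx : cycle5.adjMatrix R *ᵥ x = μ • x) :
    ∀ l : List (Fin 5), (∀ a ∈ l, x a = 0) →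
      (resemGraph l).adjMatrix R *ᵥ liftCycle5 x l = μ • liftCycle5 x l
  | [], _ => hx
  | a :: l, hl => by
    refine adjMatrix_dupGraph_mulVec_sumElim_zero_of_eq_smul _ _
      (resemGraph_adjMatrix_mulVec_liftCycle5 hx l fun b hb => hl b (.tail _ hb)) ?_
    rw [liftCycle5_origVert]
    exact hl a (.head _)

theorem cycle5_adjMatrix_mulVec_eigenvector {R : Type*} [CommRing R] {μ : R}
    (hμ : μ ^ 2 + μ = 1) :
    cycle5.adjMatrix R *ᵥ ![0, 1, μ, -μ, -1] = μ • ![0, 1, μ, -μ, -1] := by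
  rw [cycle5_adjMatrix_mulVec]
  funext i
  fin_cases i <;> simp <;> grind

theorem isRoot_charpoly_tildeR {μ : ℝ} (hμ : μ ^ 2 + μ = 1) (n : ℕ) :
    ((tildeR n).adjMatrix ℝ).charpoly.IsRoot μ := by
  refine isRoot_charpoly_of_mulVec_eq_smul (liftCycle5_ne_zero ?_ _)
    (resemGraph_adjMatrix_mulVec_liftCycle5 (cycle5_adjMatrix_mulVec_eigenvector hμ) _ ?_)
  · exact fun h => one_ne_zero (congrFun h 1)
  · intro a ha
    rw [List.eq_of_mem_replicate ha]
    rfl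

/-- For every integer `n ≥ 0`, both `−φ` and `φ⁻¹` are eigenvalues of the
adjacency matrix `A(R̃_n)`, where `φ = (1+√5)/2` is the golden ratio. -/
theorem goldenRatio_eigenvalues_tildeR (n : ℕ) :
    ((tildeR n).adjMatrix ℝ).charpoly.IsRoot (-goldenRatio') ∧
    ((tildeR n).adjMatrix ℝ).charpoly.IsRoot goldenRatio'⁻¹ := by
  refine ⟨isRoot_charpoly_tildeR ?_ n, isRoot_charpoly_tildeR ?_ n⟩
  · rw [show goldenRatio' = φ from rfl, neg_sq, goldenRatio_sq]; ring
  · rw [show goldenRatio' = φ from rfl, inv_goldenRatio, neg_sq, goldenConj_sq]; ring
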